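/- arXiv:math/0311443 — 4 statements merged into one kernel-verified Lean document; each statement's English description precedes it below -/
import Mathlib

section
/- Every nonempty Polish space that is zero-dimensional, has no isolated points, and has no nonempty compact open subsets is homeomorphic to the Baire space ℕ^ℕ. -/
/-!
A nonempty clopen subset of `X` is closed in a complete space and not compact, hence not totally
bounded; covering it by small clopen sets and disjointifying therefore splits it into infinitely
many nonempty clopen pieces of arbitrarily small diameter. Iterating the splitting yields a scheme
`A : List ℕ → Set X` of nonempty clopen sets, each the disjoint union of its children, with
diameters tending to zero along every branch. The induced map `ℕ^ℕ → X` is then a continuous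
bijection carrying each cylinder onto the corresponding (open) set of the scheme, hence a
homeomorphism.
-/

open Set Metric Topology TopologicalSpace Filter Function PiNat

theorem exists_disjoint_clopen_cover_of_nhds {X : Type*} [TopologicalSpace X]
    [SecondCountableTopology X] (hzero : IsTopologicalBasis {s : Set X | IsClopen s})
    {U : Set X} (hU : IsOpen U) (hne : U.Nonempty) {p : Set X → Prop}
    (hp_mono : ∀ ⦃s t⦄, s ⊆ t → p t → p s) (hp_nhds : ∀ x ∈ U, ∃ t ∈ 𝓝 x, p t) :
    ∃ D : ℕ → Set X, (∀ n, IsClopen (D n)) ∧ (∀ n, p (D n)) ∧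
      Pairwise (Disjoint on D) ∧ ⋃ n, D n = U := by
  set S := {V : Set X | IsClopen V ∧ V ⊆ U ∧ p V}
  have hS : ⋃₀ S = U := by
    refine subset_antisymm (sUnion_subset fun V hV => hV.2.1) fun x hx => ?_
    obtain ⟨t, ht, hpt⟩ := hp_nhds x hx
    obtain ⟨V, hV, hxV, hVt⟩ := hzero.exists_subset_of_mem_open
      (mem_interior_iff_mem_nhds.2 (inter_mem ht (hU.mem_nhds hx))) isOpen_interior
    have hVt' : V ⊆ t ∩ U := hVt.trans interior_subset
    exact ⟨V, ⟨hV, hVt'.trans inter_subset_right, hp_mono (hVt'.trans inter_subset_left) hpt⟩, hxV⟩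
  obtain ⟨T, hTc, hTS, hTU⟩ := isOpen_sUnion_countable S fun V hV => hV.1.isOpen
  obtain ⟨W, rfl⟩ := hTc.exists_eq_range (Nonempty.of_sUnion (hTU.trans hS ▸ hne))
  have hW : ∀ n, W n ∈ S := fun n => hTS ⟨n, rfl⟩
  refine ⟨disjointed W, fun n => disjointedRec (fun _ i ht => ht.diff (hW i).1) (hW n).1,
    fun n => hp_mono (disjointed_le W n) (hW n).2.2, disjoint_disjointed W, ?_⟩
  rw [iUnion_disjointed, ← sUnion_range, hTU, hS]

theorem exists_nonempty_clopen_partition_of_not_totallyBounded {X : Type*} [MetricSpace X]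
    [SecondCountableTopology X] (hzero : IsTopologicalBasis {s : Set X | IsClopen s})
    {U : Set X} (hU : IsOpen U) (hU_tb : ¬TotallyBounded U) {ε : ℝ} (hε : 0 < ε) :
    ∃ D : ℕ → Set X, (∀ n, IsClopen (D n)) ∧ (∀ n, (D n).Nonempty) ∧
      (∀ n, ediam (D n) ≤ ENNReal.ofReal ε) ∧ Pairwise (Disjoint on D) ∧ ⋃ n, D n = U := by
  have hne : U.Nonempty := nonempty_iff_ne_empty.2 fun h => hU_tb (h ▸ totallyBounded_empty)
  rw [totallyBounded_iff] at hU_tb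
  push Not at hU_tb
  obtain ⟨ε₀, hε₀, hU_cover⟩ := hU_tb
  set δ := min ε (ε₀ / 2)
  have hδ : 0 < δ := by positivity
  obtain ⟨D, hD_clopen, hD_small, hD_disj, hD_union⟩ :=
    exists_disjoint_clopen_cover_of_nhds hzero hU hne
      (p := fun s => ∀ x ∈ s, ∀ y ∈ s, dist x y ≤ δ)
      (fun s t hst ht x hx y hy => ht x (hst hx) y (hst hy))
      fun x _ => ⟨ball x (δ / 2), ball_mem_nhds x (half_pos hδ), fun y hy z hz => by
        linarith [dist_triangle_right y z x, mem_ball.1 hy, mem_ball.1 hz]⟩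
  set P := fun n => (D n).Nonempty
  -- Finitely many nonempty pieces would cover `U` by finitely many `ε₀`-balls.
  have hP : {n | P n}.Infinite := by
    intro hfin
    have : Nonempty X := hne.to_subtype.map (↑)
    choose! c hc using fun n (hn : P n) => hn
    refine hU_cover (c '' {n | P n}) (hfin.image c) fun x hx => ?_
    obtain ⟨n, hxn⟩ := mem_iUnion.1 (hD_union ▸ hx)
    refine mem_biUnion (mem_image_of_mem c ⟨x, hxn⟩) (mem_ball.2 ?_)
    linarith [hD_small n x hxn (c n) (hc n ⟨x, hxn⟩), min_le_right ε (ε₀ / 2)]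
  refine ⟨D ∘ Nat.nth P, fun n => hD_clopen _, Nat.nth_mem_of_infinite hP,
    fun n => ediam_le_of_forall_dist_le fun x hx y hy =>
      (hD_small _ x hx y hy).trans (min_le_left _ _),
    hD_disj.comp_of_injective (Nat.nth_injective hP), ?_⟩
  refine subset_antisymm (hD_union ▸ iUnion_subset fun n => subset_iUnion D _) ?_
  rw [← hD_union]
  refine iUnion_subset fun n x hx => ?_
  obtain ⟨m, rfl⟩ : n ∈ range (Nat.nth P) := (Nat.range_nth_of_infinite hP).symm ▸ ⟨x, hx⟩
  exact mem_iUnion.2 ⟨m, hx⟩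

namespace CantorScheme

variable {β α : Type*} {A : List β → Set α}

theorem antitone_of_iUnion_eq (hsplit : ∀ l, ⋃ a, A (a :: l) = A l) :
    CantorScheme.Antitone A :=
  fun l a => hsplit l ▸ subset_iUnion (fun a => A (a :: l)) a

theorem Disjoint.eq_of_mem_of_mem (hdisj : CantorScheme.Disjoint A)
    (hanti : CantorScheme.Antitone A) :
    ∀ {l l' : List β}, l.length = l'.length → ∀ {y : α}, y ∈ A l → y ∈ A l' → l = l'
  | [], [], _, _, _, _ => rfl
  | a :: l, a' :: l', hlen, y, hy, hy' => by
    obtain rfl := hdisj.eq_of_mem_of_mem hanti (Nat.succ.inj hlen) (hanti l a hy) (hanti l' a' hy')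
    by_contra hne
    exact Set.disjoint_left.1 (hdisj l fun h => hne (congrArg (· :: l) h)) hy hy'

theorem exists_forall_mem_res (hroot : A [] = univ) (hsplit : ∀ l, ⋃ a, A (a :: l) = A l)
    (y : α) : ∃ x : ℕ → β, ∀ n, y ∈ A (res x n) := by
  have hstep : ∀ l, y ∈ A l → ∃ a, y ∈ A (a :: l) := fun l hy => mem_iUnion.1 (hsplit l ▸ hy)
  have : Nonempty β := ⟨(hstep [] (hroot ▸ mem_univ y)).choose⟩
  choose! step hstep using hstep
  set g : List β → List β := fun l => step l :: l
  have hres : ∀ n, res (fun k => step (g^[k] [])) n = g^[n] [] := by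
    intro n
    induction n with
    | zero => rfl
    | succ n ih => rw [res_succ, ih, iterate_succ_apply']
  refine ⟨fun k => step (g^[k] []), fun n => hres n ▸ ?_⟩
  induction n with
  | zero => exact hroot ▸ mem_univ y
  | succ n ih => exact iterate_succ_apply' g n [] ▸ hstep _ ih

theorem VanishingDiam.eq_of_forall_mem [MetricSpace α] (hdiam : VanishingDiam A) {x : ℕ → β}
    {y z : α} (hy : ∀ n, y ∈ A (res x n)) (hz : ∀ n, z ∈ A (res x n)) : y = z := by
  by_contra hne
  obtain ⟨n, hn⟩ := hdiam.dist_lt _ (dist_pos.2 hne) x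
  exact lt_irrefl _ (hn y (hy n) z (hz n))

theorem nonempty_homeomorph [MetricSpace α] [CompleteSpace α] [TopologicalSpace β]
    [DiscreteTopology β] (hroot : A [] = univ) (hsplit : ∀ l, ⋃ a, A (a :: l) = A l)
    (hdisj : CantorScheme.Disjoint A) (hdiam : VanishingDiam A)
    (hclopen : ∀ l, IsClopen (A l)) (hne : ∀ l, (A l).Nonempty) :
    Nonempty ((ℕ → β) ≃ₜ α) := by
  have hanti := antitone_of_iUnion_eq hsplit
  have hdom : (inducedMap A).1 = univ :=
    (hanti.closureAntitone fun l => (hclopen l).isClosed).map_of_vanishingDiam hdiam hne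
  set f : (ℕ → β) → α := fun x => (inducedMap A).2 ⟨x, hdom ▸ mem_univ x⟩
  have hf_mem : ∀ x n, f x ∈ A (res x n) := fun x => map_mem _
  have hf_surj : Surjective f := fun y =>
    let ⟨x, hx⟩ := exists_forall_mem_res hroot hsplit y
    ⟨x, hdiam.eq_of_forall_mem (hf_mem x) hx⟩
  have hf_inj : Injective f := fun x y h => congrArg Subtype.val (hdisj.map_injective h)
  have hf_cylinder : ∀ x n, f '' cylinder x n = A (res x n) := by
    intro x n
    refine subset_antisymm ?_ fun y hy => ?_
    · rintro _ ⟨z, hz, rfl⟩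
      rw [cylinder_eq_res] at hz
      exact hz ▸ hf_mem z n
    · obtain ⟨z, rfl⟩ := hf_surj y
      refine ⟨z, ?_, rfl⟩
      rw [cylinder_eq_res]
      exact hdisj.eq_of_mem_of_mem hanti (by simp) (hf_mem z n) hy
  refine ⟨(Equiv.ofBijective f ⟨hf_inj, hf_surj⟩).toHomeomorphOfContinuousOpen
    (hdiam.map_continuous.comp (continuous_id.subtype_mk _)) ?_⟩
  refine (isTopologicalBasis_cylinders _).isOpenMap_iff.2 ?_
  rintro _ ⟨x, n, rfl⟩
  change IsOpen (f '' cylinder x n)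
  exact hf_cylinder x n ▸ (hclopen _).isOpen

end CantorScheme

noncomputable def refinementScheme {X : Type*} (e : Set X → ℕ → ℕ → Set X) : List ℕ → Set X
  | [] => univ
  | a :: l => e (refinementScheme e l) l.length a

theorem exists_clopen_cantorScheme {X : Type*} [MetricSpace X] [CompleteSpace X]
    [SecondCountableTopology X] [Nonempty X]
    (hzero : IsTopologicalBasis {s : Set X | IsClopen s})
    (hnck : ∀ U : Set X, IsOpen U → IsCompact U → U = ∅) :
    ∃ A : List ℕ → Set X, A [] = univ ∧ (∀ l, ⋃ a, A (a :: l) = A l) ∧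
      CantorScheme.Disjoint A ∧ CantorScheme.VanishingDiam A ∧
      ∀ l, IsClopen (A l) ∧ (A l).Nonempty := by
  have hpartition : ∀ U : Set X, IsClopen U → U.Nonempty → ∀ k : ℕ, ∃ D : ℕ → Set X,
      (∀ n, IsClopen (D n)) ∧ (∀ n, (D n).Nonempty) ∧
      (∀ n, ediam (D n) ≤ ENNReal.ofReal (1 / (k + 1))) ∧
      Pairwise (Disjoint on D) ∧ ⋃ n, D n = U := fun U hU hne k =>
    exists_nonempty_clopen_partition_of_not_totallyBounded hzero hU.isOpen
      (fun htb => hne.ne_empty (hnck U hU.isOpen (htb.isCompact_of_isClosed hU.isClosed)))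
      Nat.one_div_pos_of_nat
  choose! e he_clopen he_ne he_diam he_disj he_union using hpartition
  set A := refinementScheme e
  have hA : ∀ l, IsClopen (A l) ∧ (A l).Nonempty := by
    intro l
    induction l with
    | nil => exact ⟨isClopen_univ, univ_nonempty⟩
    | cons a l ih => exact ⟨he_clopen _ ih.1 ih.2 _ a, he_ne _ ih.1 ih.2 _ a⟩
  refine ⟨A, rfl, fun l => he_union _ (hA l).1 (hA l).2 _, fun l => he_disj _ (hA l).1 (hA l).2 _,
    fun x => ?_, hA⟩
  have hbound : ∀ n, ediam (A (res x (n + 1))) ≤ ENNReal.ofReal (1 / (n + 1)) := fun n =>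
    (he_diam _ (hA (res x n)).1 (hA (res x n)).2 (res x n).length (x n)).trans_eq
      (by rw [res_length])
  have hlim : Tendsto (fun n : ℕ => ENNReal.ofReal (1 / (n + 1))) atTop (𝓝 0) :=
    ENNReal.ofReal_zero ▸ ENNReal.tendsto_ofReal tendsto_one_div_add_atTop_nhds_zero_nat
  exact (tendsto_add_atTop_iff_nat 1).1 <|
    tendsto_of_tendsto_of_tendsto_of_le_of_le tendsto_const_nhds hlim (fun _ => zero_le) hbound

theorem stmt_7_general {X : Type*} [TopologicalSpace X] [PolishSpace X] [Nonempty X]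
    (hzero : TopologicalSpace.IsTopologicalBasis {s : Set X | IsClopen s})
    (hnck : ∀ U : Set X, IsOpen U → IsCompact U → U = ∅) :
    Nonempty (X ≃ₜ (ℕ → ℕ)) := by
  let := upgradeIsCompletelyMetrizable X
  obtain ⟨A, hroot, hsplit, hdisj, hdiam, hA⟩ := exists_clopen_cantorScheme hzero hnck
  obtain ⟨h⟩ := CantorScheme.nonempty_homeomorph hroot hsplit hdisj hdiam
    (fun l => (hA l).1) fun l => (hA l).2
  exact ⟨h.symm⟩

theorem stmt_7 {X : Type*} [TopologicalSpace X] [PolishSpace X] [Nonempty X]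
    (hzero : TopologicalSpace.IsTopologicalBasis {s : Set X | IsClopen s})
    (hperf : Preperfect (Set.univ : Set X))
    (hnck : ∀ U : Set X, IsOpen U → IsCompact U → U = ∅) :
    Nonempty (X ≃ₜ (ℕ → ℕ)) :=
  stmt_7_general hzero hnck
end

section
/- If the statement perfect(ℕ^ℕ) holds (every nonmeager subset of Baire space has nonmeager intersection with some nowhere dense perfect subset, relative to that perfect set), then perfect(X) holds for every perfect Polish space X. -/
def PerfectProp (X : Type*) [TopologicalSpace X] : Prop :=
  ∀ A : Set X, ¬ IsMeagre A →
    ∃ P : Set X, IsNowhereDense P ∧ Perfect P ∧ P.Nonempty ∧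
      ¬ IsMeagre ((↑) ⁻¹' A : Set P)

def CantorProp (X : Type*) [TopologicalSpace X] : Prop :=
  ∀ A : Set X, ¬ IsMeagre A →
    ∃ C : Set X, IsNowhereDense C ∧ Nonempty (C ≃ₜ (ℕ → Bool)) ∧
      ¬ IsMeagre ((↑) ⁻¹' A : Set C)

open Set Filter Topology Metric Function PiNat

/-! A perfect Polish space `X` splits every nonempty open set into countably many disjoint open
pieces of small diameter with dense union; iterating this gives a Lusin scheme whose induced map
`e : (ℕ → ℕ) → X` is an embedding. A point missed by `e` lies, at some node, outside all the
children, i.e. in the frontier of their union, so `(range e)ᶜ` is meagre. For nonmeagre `A ⊆ X` the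
preimage `e ⁻¹' A` is then nonmeagre, and the nowhere dense perfect `Q ⊆ ℕ → ℕ` it yields is carried
to the nowhere dense perfect set `closure (e '' Q)`, in which `e '' Q` is a dense embedded copy of
`Q`; meagreness pulls back along dense embeddings, so `A` stays nonmeagre in it. -/

section Transfer

variable {α β : Type*} [TopologicalSpace α] [TopologicalSpace β] {f : α → β}

theorem Topology.IsInducing.dense_preimage_of_denseRange (hf : IsInducing f) (hd : DenseRange f)
    {t : Set β} (ht : IsOpen t) (htd : Dense t) : Dense (f ⁻¹' t) := by
  refine dense_iff_inter_open.mpr fun W hW hWne => ?_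
  obtain ⟨O, hO, rfl⟩ := hf.isOpen_iff.mp hW
  have hOt : (O ∩ t).Nonempty :=
    htd.inter_open_nonempty O hO (hWne.image f |>.mono (image_preimage_subset f O))
  obtain ⟨-, hft, a, rfl⟩ := hd.inter_open_nonempty _ (hO.inter ht) hOt
  exact ⟨a, hft⟩

theorem Topology.IsInducing.tendsto_residual_of_denseRange (hf : IsInducing f) (hd : DenseRange f) :
    Tendsto f (residual α) (residual β) := by
  refine le_countableGenerate_iff_of_countableInterFilter.mpr ?_
  rintro t ⟨ht, htd⟩
  exact residual_of_dense_open (ht.preimage hf.continuous)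
    (hf.dense_preimage_of_denseRange hd ht htd)

theorem IsMeagre.preimage_of_isInducing (hf : IsInducing f) (hd : DenseRange f) {t : Set β}
    (ht : IsMeagre t) : IsMeagre (f ⁻¹' t) :=
  hf.tendsto_residual_of_denseRange hd ht

theorem Preperfect.image_of_isEmbedding {C : Set α} (hC : Preperfect C) (hf : IsEmbedding f) :
    Preperfect (f '' C) := by
  rintro - ⟨x, hx, rfl⟩
  rw [accPt_iff_nhds]
  intro U hU
  obtain ⟨y, ⟨hyU, hyC⟩, hyx⟩ :=
    accPt_iff_nhds.mp (hC x hx) _ (hf.continuous.continuousAt.preimage_mem_nhds hU)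
  exact ⟨f y, ⟨hyU, mem_image_of_mem f hyC⟩, hf.injective.ne hyx⟩

theorem PerfectProp.of_isEmbedding [T1Space β] (h : PerfectProp α) (hf : IsEmbedding f)
    (hrange : IsMeagre (range f)ᶜ) : PerfectProp β := by
  intro A hA
  have hB : ¬ IsMeagre (f ⁻¹' A) := by
    intro hB
    have hcover : A ⊆ f '' (f ⁻¹' A) ∪ (range f)ᶜ := by
      rw [image_preimage_eq_inter_range]
      exact fun a ha => (em (a ∈ range f)).imp (fun hr => ⟨ha, hr⟩) id
    exact hA (((hf.isInducing.isMeagre_image hB).union hrange).mono hcover)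
  obtain ⟨Q, hQnwd, hQperf, hQne, hQA⟩ := h _ hB
  refine ⟨closure (f '' Q), (hf.isInducing.isNowhereDense_image hQnwd).closure,
    (hQperf.acc.image_of_isEmbedding hf).perfect_closure, (hQne.image f).closure, fun hP => ?_⟩
  let j : Q → closure (f '' Q) := fun q => ⟨f q, subset_closure (mem_image_of_mem f q.2)⟩
  have hj : IsEmbedding j := (hf.comp IsEmbedding.subtypeVal).codRestrict _ _
  have hjd : DenseRange j := by
    rw [DenseRange, Subtype.dense_iff, ← range_comp]
    exact closure_mono (image_eq_range f Q).subset
  exact hQA (hP.preimage_of_isInducing hj.isInducing hjd)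

end Transfer

section Splitting

variable {X : Type*} [MetricSpace X]

structure IsSplitting (U : Set X) (ε : ℝ) (V : ℕ → Set X) : Prop where
  isOpen : ∀ n, IsOpen (V n)
  nonempty : ∀ n, (V n).Nonempty
  closure_subset : ∀ n, closure (V n) ⊆ U
  ediam_le : ∀ n, ediam (V n) ≤ ENNReal.ofReal ε
  pairwise_disjoint : Pairwise (Disjoint on V)
  subset_closure_iUnion : U ⊆ closure (⋃ n, V n)

theorem exists_countable_pairwiseDisjoint_dense [TopologicalSpace.SeparableSpace X] {W : Set X}
    (hW : IsOpen W) {ε : ℝ} (hε : 0 < ε) :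
    ∃ 𝒱 : Set (Set X), 𝒱.Countable ∧ 𝒱.PairwiseDisjoint id ∧
      (∀ V ∈ 𝒱, IsOpen V ∧ V.Nonempty ∧ closure V ⊆ W ∧ ediam V ≤ ENNReal.ofReal ε) ∧
      W ⊆ closure (⋃₀ 𝒱) := by
  let t : Set (X × ℝ) := {a | 0 < a.2 ∧ a.2 ≤ ε / 2 ∧ closedBall a.1 a.2 ⊆ W}
  obtain ⟨u, hut, hu, hmeet⟩ := Vitali.exists_disjoint_subfamily_covering_enlargement
    (fun a => ball a.1 a.2) t Prod.snd 2 one_lt_two (fun a ha => ha.1.le) (ε / 2)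
    (fun a ha => ha.2.1) (fun a ha => nonempty_ball.mpr ha.1)
  refine ⟨(fun a => ball a.1 a.2) '' u, ?_, ?_, ?_, ?_⟩
  · exact (hu.countable_of_isOpen (fun _ _ => isOpen_ball)
      fun a ha => nonempty_ball.mpr (hut ha).1).image _
  · rintro - ⟨a, ha, rfl⟩ - ⟨b, hb, rfl⟩ hab
    exact hu ha hb fun h => hab (h ▸ rfl)
  · rintro - ⟨a, ha, rfl⟩
    obtain ⟨hr, hrε, hW⟩ := hut ha
    refine ⟨isOpen_ball, nonempty_ball.mpr hr, closure_ball_subset_closedBall.trans hW, ?_⟩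
    refine ediam_le_of_forall_dist_le fun y hy z hz => ?_
    linarith [dist_triangle_right y z a.1, mem_ball.mp hy, mem_ball.mp hz]
  · intro x hx
    refine mem_closure_iff.mpr fun O hO hxO => ?_
    obtain ⟨r, hr, hball⟩ := Metric.isOpen_iff.mp (hO.inter hW) x ⟨hxO, hx⟩
    set r' := min (r / 2) (ε / 2)
    have hr' : 0 < r' := lt_min (half_pos hr) (half_pos hε)
    have hsub : closedBall x r' ⊆ O ∩ W :=
      (closedBall_subset_ball ((min_le_left _ _).trans_lt (half_lt_self hr))).trans hball
    obtain ⟨b, hb, ⟨y, hya, hyb⟩, -⟩ :=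
      hmeet (x, r') ⟨hr', min_le_right _ _, hsub.trans inter_subset_right⟩
    exact ⟨y, (hsub (ball_subset_closedBall hya)).1, ball b.1 b.2, mem_image_of_mem _ hb, hyb⟩

theorem exists_isSplitting [TopologicalSpace.SeparableSpace X] (hperf : Preperfect (univ : Set X))
    {U : Set X} (hU : IsOpen U) (hne : U.Nonempty) {ε : ℝ} (hε : 0 < ε) :
    ∃ V, IsSplitting U ε V := by
  obtain ⟨z, hz⟩ := hne
  obtain ⟨𝒱, hc, hdisj, h𝒱, hdense⟩ :=
    exists_countable_pairwiseDisjoint_dense (hU.sdiff isClosed_singleton) hε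
  have hz_closure : z ∈ closure (U \ {z}) := by
    refine mem_closure_iff_nhds.mpr fun t ht => ?_
    obtain ⟨y, ⟨⟨hyt, hyU⟩, -⟩, hyz⟩ :=
      accPt_iff_nhds.mp (hperf z (mem_univ z)) _ (inter_mem ht (hU.mem_nhds hz))
    exact ⟨y, hyt, hyU, hyz⟩
  have hz_closure' : z ∈ closure (⋃₀ 𝒱) :=
    closure_minimal hdense isClosed_closure hz_closure
  -- Removing the non-isolated point `z` forces infinitely many pieces: finitely many closures
  -- inside `U \ {z}` would form a closed set containing `U \ {z}` but not `z`.
  have hinf : 𝒱.Infinite := by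
    intro hfin
    have hclosed : closure (⋃₀ 𝒱) ⊆ U \ {z} := by
      rw [hfin.closure_sUnion]
      exact iUnion₂_subset fun V hV => (h𝒱 V hV).2.2.1
    exact (hclosed hz_closure').2 rfl
  have := hc.to_subtype
  have := hinf.to_subtype
  obtain ⟨_⟩ := nonempty_denumerable 𝒱
  let e := (Denumerable.eqv 𝒱).symm
  refine ⟨fun n => e n, fun n => (h𝒱 _ (e n).2).1, fun n => (h𝒱 _ (e n).2).2.1,
    fun n => (h𝒱 _ (e n).2).2.2.1.trans sdiff_subset, fun n => (h𝒱 _ (e n).2).2.2.2,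
    fun m n hmn => hdisj (e m).2 (e n).2 fun h => hmn (e.injective (Subtype.ext h)), ?_⟩
  rw [e.surjective.iUnion_comp (fun V : 𝒱 => (V : Set X)), ← sUnion_eq_iUnion]
  intro x hx
  rcases eq_or_ne x z with rfl | hxz
  exacts [hz_closure', hdense ⟨hx, hxz⟩]

end Splitting

theorem IsOpen.isNowhereDense_frontier {X : Type*} [TopologicalSpace X] {s : Set X}
    (hs : IsOpen s) : IsNowhereDense (frontier s) := by
  rw [isClosed_frontier.isNowhereDense_iff, ← frontier_compl]
  exact interior_frontier hs.isClosed_compl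

namespace CantorScheme

variable {β α : Type*} {A : List β → Set α}

theorem Disjoint.disjoint_of_length_eq (hanti : CantorScheme.Antitone A)
    (hA : CantorScheme.Disjoint A) :
    ∀ {s t : List β}, s.length = t.length → s ≠ t → _root_.Disjoint (A s) (A t)
  | [], [], _, hst => absurd rfl hst
  | a :: s, b :: t, hl, hst => by
    rcases eq_or_ne s t with rfl | hst'
    · exact hA s fun hab => hst (hab ▸ rfl)
    · exact (hA.disjoint_of_length_eq hanti (Nat.succ.inj hl) hst').mono
        (hanti s a) (hanti t b)

noncomputable def totalMap (h : (inducedMap A).1 = univ) (x : ℕ → β) : α :=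
  (inducedMap A).2 ⟨x, h.symm ▸ mem_univ x⟩

variable {h : (inducedMap A).1 = univ}

theorem totalMap_mem (x : ℕ → β) (n : ℕ) : totalMap h x ∈ A (res x n) :=
  map_mem _ n

theorem totalMap_mem_iff (hanti : CantorScheme.Antitone A) (hA : CantorScheme.Disjoint A)
    {x y : ℕ → β} {n : ℕ} : totalMap h y ∈ A (res x n) ↔ res y n = res x n := by
  refine ⟨fun hy => ?_, fun hyx => hyx ▸ totalMap_mem y n⟩
  by_contra hne
  exact (hA.disjoint_of_length_eq hanti (by simp) hne).ne_of_mem (totalMap_mem y n) hy rfl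

theorem preimage_totalMap (hanti : CantorScheme.Antitone A) (hA : CantorScheme.Disjoint A)
    (x : ℕ → β) (n : ℕ) : totalMap h ⁻¹' A (res x n) = cylinder x n := by
  ext y
  rw [cylinder_eq_res]
  exact totalMap_mem_iff hanti hA

section Metric

variable [PseudoMetricSpace α] [TopologicalSpace β] [DiscreteTopology β]

theorem VanishingDiam.isEmbedding_totalMap (hdiam : VanishingDiam A)
    (hanti : CantorScheme.Antitone A) (hA : CantorScheme.Disjoint A) (hopen : ∀ l, IsOpen (A l)) :
    IsEmbedding (totalMap h) := by
  have hcont : Continuous (totalMap h) :=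
    hdiam.map_continuous.comp (continuous_id.subtype_mk _)
  refine ⟨isInducing_iff_nhds.mpr fun x => le_antisymm hcont.continuousAt.le_comap ?_,
    hA.map_injective.comp fun _ _ hxy => congrArg Subtype.val hxy⟩
  intro s hs
  obtain ⟨-, ⟨y, n, rfl⟩, hx, hs⟩ := (isTopologicalBasis_cylinders _).mem_nhds_iff.mp hs
  rw [← mem_cylinder_iff_eq.mp hx] at hs
  exact mem_comap.mpr ⟨A (res x n), (hopen _).mem_nhds (totalMap_mem x n),
    (preimage_totalMap hanti hA x n).trans_subset hs⟩

end Metric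

variable [MetricSpace α]

theorem VanishingDiam.subset_range_totalMap (hdiam : VanishingDiam A) (hroot : A [] = univ) :
    {p | ∀ l, p ∈ A l → ∃ b, p ∈ A (b :: l)} ⊆ range (totalMap h) := by
  intro p hp
  obtain ⟨b₀, -⟩ := hp [] (hroot ▸ mem_univ p)
  choose f hf using fun l => (em (p ∈ A l)).elim (fun hl => (hp l hl).imp fun _ hb _ => hb)
    fun hl => ⟨b₀, fun h' => absurd h' hl⟩
  -- `branch n` is the node of length `n` containing `p`
  let branch : ℕ → List β := fun n => Nat.rec [] (fun _ l => f l :: l) n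
  let x : ℕ → β := fun n => f (branch n)
  have hres : ∀ n, res x n = branch n := by
    intro n
    induction n with
    | zero => rfl
    | succ n ih => rw [res_succ, ih]
  have hmem : ∀ n, p ∈ A (res x n) := by
    intro n
    induction n with
    | zero => exact hroot ▸ mem_univ p
    | succ n ih => rw [hres] at ih ⊢; exact hf _ ih
  refine ⟨x, eq_of_forall_dist_le fun ε hε => ?_⟩
  obtain ⟨n, hn⟩ := hdiam.dist_lt ε hε x
  exact (hn _ (totalMap_mem x n) _ (hmem n)).le

theorem VanishingDiam.isMeagre_compl_range_totalMap [Countable β] (hdiam : VanishingDiam A)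
    (hroot : A [] = univ) (hopen : ∀ l, IsOpen (A l))
    (hchildren : ∀ l, A l ⊆ closure (⋃ b, A (b :: l))) :
    IsMeagre (range (totalMap h))ᶜ := by
  have hcover : (range (totalMap h))ᶜ ⊆ ⋃ l, A l \ ⋃ b, A (b :: l) := by
    intro p hp
    by_contra hcon
    refine hp (hdiam.subset_range_totalMap hroot fun l hl => ?_)
    by_contra hl'
    exact hcon (mem_iUnion.mpr ⟨l, hl, fun hb => hl' (mem_iUnion.mp hb)⟩)
  refine IsMeagre.mono hcover (isMeagre_iUnion fun l => IsNowhereDense.isMeagre ?_)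
  have hO : IsOpen (⋃ b, A (b :: l)) := isOpen_iUnion fun b => hopen _
  exact hO.isNowhereDense_frontier.mono (hO.frontier_eq ▸ sdiff_subset_sdiff_left (hchildren l))

end CantorScheme

section LusinScheme

variable {X : Type*} [MetricSpace X] [TopologicalSpace.SeparableSpace X] [Nonempty X]

noncomputable def lusinScheme (hperf : Preperfect (univ : Set X)) :
    List ℕ → {U : Set X // IsOpen U ∧ U.Nonempty}
  | [] => ⟨univ, isOpen_univ, univ_nonempty⟩
  | n :: l =>
    have h := exists_isSplitting hperf (lusinScheme hperf l).2.1 (lusinScheme hperf l).2.2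
      (ε := 2⁻¹ ^ l.length) (by positivity)
    ⟨h.choose n, h.choose_spec.isOpen n, h.choose_spec.nonempty n⟩

theorem isSplitting_lusinScheme (hperf : Preperfect (univ : Set X)) (l : List ℕ) :
    IsSplitting (lusinScheme hperf l : Set X) (2⁻¹ ^ l.length)
      fun n => (lusinScheme hperf (n :: l) : Set X) :=
  (exists_isSplitting hperf (lusinScheme hperf l).2.1 (lusinScheme hperf l).2.2
      (ε := 2⁻¹ ^ l.length) (by positivity)).choose_spec

theorem vanishingDiam_lusinScheme (hperf : Preperfect (univ : Set X)) :
    CantorScheme.VanishingDiam fun l => (lusinScheme hperf l : Set X) := by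
  intro x
  refine (tendsto_add_atTop_iff_nat 1).mp ?_
  have hlim : Tendsto (fun n : ℕ => ENNReal.ofReal (2⁻¹ ^ n)) atTop (𝓝 0) :=
    ENNReal.ofReal_zero ▸ ENNReal.tendsto_ofReal
      (tendsto_pow_atTop_nhds_zero_of_lt_one (by norm_num) (by norm_num))
  refine tendsto_of_tendsto_of_tendsto_of_le_of_le tendsto_const_nhds hlim (fun _ => bot_le)
    fun n => ?_
  simpa using (isSplitting_lusinScheme hperf (res x n)).ediam_le (x n)

theorem exists_isEmbedding_isMeagre_compl_range [CompleteSpace X]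
    (hperf : Preperfect (univ : Set X)) :
    ∃ e : (ℕ → ℕ) → X, IsEmbedding e ∧ IsMeagre (range e)ᶜ := by
  set A := fun l => (lusinScheme hperf l : Set X)
  have hanti : CantorScheme.ClosureAntitone A := fun l n =>
    (isSplitting_lusinScheme hperf l).closure_subset n
  have hdisj : CantorScheme.Disjoint A := fun l =>
    (isSplitting_lusinScheme hperf l).pairwise_disjoint
  have hdiam := vanishingDiam_lusinScheme hperf
  have hopen : ∀ l, IsOpen (A l) := fun l => (lusinScheme hperf l).2.1
  have hdom := hanti.map_of_vanishingDiam hdiam fun l => (lusinScheme hperf l).2.2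
  exact ⟨CantorScheme.totalMap hdom, hdiam.isEmbedding_totalMap hanti.antitone hdisj hopen,
    hdiam.isMeagre_compl_range_totalMap rfl hopen fun l =>
      (isSplitting_lusinScheme hperf l).subset_closure_iUnion⟩

end LusinScheme

theorem stmt_9 (h : PerfectProp (ℕ → ℕ)) (X : Type*) [TopologicalSpace X]
    [PolishSpace X] [Nonempty X] (hperf : Preperfect (Set.univ : Set X)) :
    PerfectProp X := by
  let := TopologicalSpace.upgradeIsCompletelyMetrizable X
  obtain ⟨e, he, hrange⟩ := exists_isEmbedding_isMeagre_compl_range hperf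
  exact h.of_isEmbedding he hrange
end

section
/- If X is a perfect Polish space and perfect(X) holds, then perfect(ℕ^ℕ) holds. -/
open Set Function Topology Filter Metric PiNat

section Category

variable {Y Z : Type*} [TopologicalSpace Y] [TopologicalSpace Z]

theorem IsDenseInducing.isNowhereDense_preimage {f : Z → Y} (hf : IsDenseInducing f)
    {s : Set Y} (hs : IsNowhereDense s) : IsNowhereDense (f ⁻¹' s) := by
  obtain ⟨W, hW, hWeq⟩ :=
    hf.isInducing.isOpen_iff.1 (isOpen_interior (s := closure (f ⁻¹' s)))
  have hW_range : W ∩ range f ⊆ closure s := by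
    rintro _ ⟨hy, x, rfl⟩
    have hx : x ∈ interior (closure (f ⁻¹' s)) := hWeq ▸ hy
    exact hf.continuous.closure_preimage_subset s (interior_subset hx)
  have hW_empty : W ⊆ interior (closure s) :=
    interior_maximal ((hf.dense.open_subset_closure_inter hW).trans
      (closure_minimal hW_range isClosed_closure)) hW
  rw [hs, subset_empty_iff] at hW_empty
  rw [IsNowhereDense, ← hWeq, hW_empty, preimage_empty]

theorem IsDenseInducing.isMeagre_preimage {f : Z → Y} (hf : IsDenseInducing f)
    {s : Set Y} (hs : IsMeagre s) : IsMeagre (f ⁻¹' s) := by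
  rw [isMeagre_iff_countable_union_isNowhereDense] at hs ⊢
  obtain ⟨S, hS, hSc, hsS⟩ := hs
  refine ⟨preimage f '' S, forall_mem_image.2 fun t ht ↦ hf.isNowhereDense_preimage (hS t ht),
    hSc.image _, ?_⟩
  rw [sUnion_image, ← preimage_iUnion₂, ← sUnion_eq_biUnion]
  exact preimage_mono hsS

theorem Set.Countable.isMeagre_of_perfectSpace [T1Space Y] [PerfectSpace Y] {s : Set Y}
    (hs : s.Countable) : IsMeagre s := by
  rw [← biUnion_of_singleton s]
  exact isMeagre_biUnion hs fun x _ ↦ IsNowhereDense.isMeagre <| by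
    rw [isClosed_singleton.isNowhereDense_iff, interior_singleton]

theorem Preperfect.perfectSpace {C : Set Y} (hC : Preperfect C) : PerfectSpace C := by
  refine ⟨preperfect_iff_nhds.2 fun x _ U hU ↦ ?_⟩
  obtain ⟨V, hV, hVU⟩ := (mem_nhds_subtype C x U).1 hU
  obtain ⟨y, ⟨hyV, hyC⟩, hyx⟩ := preperfect_iff_nhds.1 hC x x.2 V hV
  exact ⟨⟨y, hyC⟩, ⟨hVU hyV, mem_univ _⟩, fun h ↦ hyx (congrArg Subtype.val h)⟩

theorem Topology.IsEmbedding.isMeagre_preimage_val_image [T1Space Y] {g : Z → Y}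
    (hg : IsEmbedding g) {P : Set Y} (hP : Preperfect P) {C K : Set Z} (hC : C.Countable)
    (hPCK : g ⁻¹' P = C ∪ K) {A : Set Z} (hA : IsMeagre ((↑) ⁻¹' A : Set K)) :
    IsMeagre ((↑) ⁻¹' (g '' A) : Set P) := by
  have hKP : MapsTo g K P := fun x hx ↦ (hPCK ▸ mem_union_right C hx : x ∈ g ⁻¹' P)
  have := hP.perfectSpace
  have hCP : IsMeagre ((↑) ⁻¹' (g '' C) : Set P) :=
    ((hC.image g).preimage Subtype.val_injective).isMeagre_of_perfectSpace
  refine (((hg.restrict hKP).isInducing.isMeagre_image hA).union hCP).mono ?_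
  rintro p ⟨a, ha, hap⟩
  have haCK : a ∈ C ∪ K := hPCK ▸ (show g a ∈ P from hap ▸ p.2)
  rcases haCK with haC | haK
  · exact Or.inr ⟨a, haC, hap⟩
  · exact Or.inl ⟨⟨a, haK⟩, ha, Subtype.ext hap⟩

end Category

section Construction

variable {X : Type*} [MetricSpace X] [PerfectSpace X]

theorem IsOpen.exists_small_nhds_closure_ssubset {O : Set X} (hO : IsOpen O) {p : X}
    (hp : p ∈ O) {ε : ℝ} (hε : 0 < ε) :
    ∃ W, IsOpen W ∧ p ∈ W ∧ closure W ⊂ O ∧ ∀ a ∈ W, ∀ b ∈ W, dist a b ≤ ε := by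
  obtain ⟨q, hqO, hqp⟩ : (O \ {p}).Nonempty :=
    nonempty_of_mem (sdiff_mem_nhdsWithin_compl (hO.mem_nhds hp) {p})
  obtain ⟨s, hs, hsO⟩ := Metric.isOpen_iff.1 hO p hp
  have hqp : 0 < dist q p := dist_pos.2 hqp
  set r := min (min (ε / 2) (dist q p / 2)) (s / 2)
  have hr : 0 < r := by positivity
  refine ⟨ball p r, isOpen_ball, mem_ball_self hr,
    ssubset_iff_subset_not_subset.2 ⟨?_, fun hO ↦ ?_⟩, fun a ha b hb ↦ ?_⟩
  · exact closure_ball_subset_closedBall.trans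
      ((closedBall_subset_ball ((min_le_right _ _).trans_lt (half_lt_self hs))).trans hsO)
  · have := mem_closedBall.1 (closure_ball_subset_closedBall (hO hqO))
    have : r ≤ dist q p / 2 := (min_le_left _ _).trans (min_le_right _ _)
    linarith
  · have : r ≤ ε / 2 := (min_le_left _ _).trans (min_le_left _ _)
    linarith [dist_triangle_right a b p, mem_ball.1 ha, mem_ball.1 hb]

theorem IsOpen.exists_disjoint_family_subset_closure_iUnion [TopologicalSpace.SeparableSpace X]
    {U : Set X} (hU : IsOpen U) (hne : U.Nonempty) {ε : ℝ} (hε : 0 < ε) :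
    ∃ V : ℕ → Set X, (∀ i, IsOpen (V i) ∧ (V i).Nonempty ∧ closure (V i) ⊆ U ∧
        ∀ a ∈ V i, ∀ b ∈ V i, dist a b ≤ ε) ∧
      Pairwise (Disjoint on V) ∧ U ⊆ closure (⋃ i, V i) := by
  have : Nonempty X := ⟨hne.some⟩
  obtain ⟨d, hd⟩ := TopologicalSpace.exists_dense_seq X
  have step : ∀ (O : {O : Set X // IsOpen O ∧ O.Nonempty}) (p : X), ∃ W : Set X,
      IsOpen W ∧ W.Nonempty ∧ closure W ⊂ O.1 ∧ (∀ a ∈ W, ∀ b ∈ W, dist a b ≤ ε) ∧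
        (p ∈ O.1 → p ∈ W) := by
    rintro ⟨O, hO, q, hq⟩ p
    by_cases hp : p ∈ O
    · obtain ⟨W, hW, hpW, hWO⟩ := hO.exists_small_nhds_closure_ssubset hp hε
      exact ⟨W, hW, ⟨p, hpW⟩, hWO.1, hWO.2, fun _ ↦ hpW⟩
    · obtain ⟨W, hW, hqW, hWO⟩ := hO.exists_small_nhds_closure_ssubset hq hε
      exact ⟨W, hW, ⟨q, hqW⟩, hWO.1, hWO.2, fun h ↦ absurd h hp⟩
  choose W hW_open hW_ne hW_closure hW_dist hW_mem using step
  -- greedily carve `W (O n) (d n)` out of what is left of `U`, capturing `d n` whenever possible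
  let O : ℕ → {O : Set X // IsOpen O ∧ O.Nonempty} := fun n ↦ Nat.rec ⟨U, hU, hne⟩
    (fun n O' ↦ ⟨O'.1 \ closure (W O' (d n)), O'.2.1.sdiff isClosed_closure,
      nonempty_of_ssubset (hW_closure _ _)⟩) n
  set V : ℕ → Set X := fun n ↦ W (O n) (d n)
  have hO_anti : Antitone fun n ↦ (O n).1 := antitone_nat_of_succ_le fun _ ↦ sdiff_subset
  have hV_O : ∀ n, V n ⊆ (O n).1 := fun n ↦ subset_closure.trans (hW_closure _ _).subset
  refine ⟨V, fun i ↦ ⟨hW_open _ _, hW_ne _ _, (hW_closure _ _).subset.trans (hO_anti i.zero_le),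
    hW_dist _ _⟩, (pairwise_disjoint_on V).2 fun m n hmn ↦ ?_, fun x hxU ↦ ?_⟩
  · refine disjoint_left.2 fun x hxm hxn ↦ ?_
    have hx : x ∈ (O (m + 1)).1 := hO_anti hmn (hV_O n hxn)
    exact hx.2 (subset_closure hxm)
  · by_contra hx
    obtain ⟨n, hnU, hn⟩ := hd.exists_mem_open (hU.sdiff isClosed_closure) ⟨x, hxU, hx⟩
    have hdO : ∀ k, d n ∈ (O k).1 := by
      intro k
      induction k with
      | zero => exact hnU
      | succ k ih => exact ⟨ih, fun h ↦ hn (closure_mono (subset_iUnion V k) h)⟩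
    exact hn (subset_closure (mem_iUnion_of_mem n (hW_mem _ _ (hdO n))))

end Construction

section LusinScheme

variable {X : Type*} [MetricSpace X]

/-- `A l` is the set indexed by the finite sequence `l`, listed newest index first as in
`PiNat.res`, so the children of `A l` are the sets `A (i :: l)`. -/
structure IsDenseLusinScheme (A : List ℕ → Set X) : Prop where
  isOpen (l : List ℕ) : IsOpen (A l)
  nonempty (l : List ℕ) : (A l).Nonempty
  nil_eq : A [] = univ
  closureAntitone : CantorScheme.ClosureAntitone A
  disjoint : CantorScheme.Disjoint A
  dist_le (l : List ℕ) (i : ℕ) : ∀ a ∈ A (i :: l), ∀ b ∈ A (i :: l), dist a b ≤ 2⁻¹ ^ l.length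
  subset_closure_iUnion (l : List ℕ) : A l ⊆ closure (⋃ i, A (i :: l))

theorem exists_isDenseLusinScheme [PerfectSpace X] [TopologicalSpace.SeparableSpace X]
    [Nonempty X] : ∃ A : List ℕ → Set X, IsDenseLusinScheme A := by
  choose V hV hV_disjoint hV_dense using fun (n : ℕ) (U : {U : Set X // IsOpen U ∧ U.Nonempty}) ↦
    U.2.1.exists_disjoint_family_subset_closure_iUnion U.2.2 (ε := 2⁻¹ ^ n) (by positivity)
  let B : List ℕ → {U : Set X // IsOpen U ∧ U.Nonempty} := fun l ↦
    List.rec ⟨univ, isOpen_univ, univ_nonempty⟩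
      (fun i l U ↦ ⟨V l.length U i, (hV _ _ i).1, (hV _ _ i).2.1⟩) l
  exact ⟨fun l ↦ (B l).1, fun l ↦ (B l).2.1, fun l ↦ (B l).2.2, rfl,
    fun _ i ↦ (hV _ _ i).2.2.1, fun _ ↦ hV_disjoint _ _, fun _ i ↦ (hV _ _ i).2.2.2,
    fun _ ↦ hV_dense _ _⟩

namespace IsDenseLusinScheme

variable {A : List ℕ → Set X}

theorem res_eq_of_mem (hA : IsDenseLusinScheme A) {x y : ℕ → ℕ} {n : ℕ} {z : X}
    (hx : z ∈ A (res x n)) (hy : z ∈ A (res y n)) : res x n = res y n := by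
  induction n with
  | zero => rfl
  | succ n ih =>
    simp only [res_succ] at hx hy ⊢
    have hn := ih (hA.closureAntitone.antitone _ _ hx) (hA.closureAntitone.antitone _ _ hy)
    rw [hn] at hx ⊢
    have hxy : x n = y n := by_contra fun hne ↦ disjoint_left.1 (hA.disjoint _ hne) hx hy
    rw [hxy]

theorem vanishingDiam (hA : IsDenseLusinScheme A) : CantorScheme.VanishingDiam A := fun x ↦ by
  refine (tendsto_add_atTop_iff_nat 1).1 (tendsto_of_tendsto_of_tendsto_of_le_of_le
    tendsto_const_nhds (h := fun n ↦ ENNReal.ofReal (2⁻¹ ^ n)) ?_ (fun _ ↦ bot_le) fun n ↦ ?_)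
  · simpa using ENNReal.tendsto_ofReal
      (tendsto_pow_atTop_nhds_zero_of_lt_one (by norm_num) (by norm_num : (2⁻¹ : ℝ) < 1))
  · simpa only [res_succ, res_length] using ediam_le_of_forall_dist_le (hA.dist_le (res x n) (x n))

theorem dense_iUnion_res (hA : IsDenseLusinScheme A) (n : ℕ) :
    Dense (⋃ x : ℕ → ℕ, A (res x n)) := by
  induction n with
  | zero => simp only [res_zero, hA.nil_eq, iUnion_const, dense_univ]
  | succ n ih =>
    refine dense_closure.1 (ih.mono (iUnion_subset fun x ↦ (hA.subset_closure_iUnion _).trans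
      (closure_mono (iUnion_subset fun i ↦ subset_iUnion_of_subset (update x n i) ?_))))
    rw [res_succ, update_self, res_eq_res.2 fun k hk ↦ update_of_ne hk.ne _ _]

variable [CompleteSpace X]

noncomputable def map (hA : IsDenseLusinScheme A) (x : ℕ → ℕ) : X :=
  (CantorScheme.inducedMap A).2 ⟨x, by
    rw [hA.closureAntitone.map_of_vanishingDiam hA.vanishingDiam hA.nonempty]; trivial⟩

theorem map_mem (hA : IsDenseLusinScheme A) (x : ℕ → ℕ) (n : ℕ) : hA.map x ∈ A (res x n) :=
  CantorScheme.map_mem _ n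

theorem continuous_map (hA : IsDenseLusinScheme A) : Continuous hA.map :=
  hA.vanishingDiam.map_continuous.comp (continuous_id.subtype_mk _)

theorem injective_map (hA : IsDenseLusinScheme A) : Injective hA.map := fun _ _ h ↦
  congrArg Subtype.val (hA.disjoint.map_injective h)

theorem denseRange_map (hA : IsDenseLusinScheme A) : DenseRange hA.map := by
  refine Metric.dense_iff.2 fun z δ hδ ↦ ?_
  obtain ⟨n, hn⟩ := exists_pow_lt_of_lt_one (half_pos hδ) (by norm_num : (2⁻¹ : ℝ) < 1)
  obtain ⟨w, hw, hwA⟩ := Metric.dense_iff.1 (hA.dense_iUnion_res (n + 1)) z (δ / 2) (half_pos hδ)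
  obtain ⟨x, hx⟩ := mem_iUnion.1 hwA
  have hxw := hA.dist_le (res x n) (x n) _ (res_succ x n ▸ hA.map_mem x (n + 1)) w
    (res_succ x n ▸ hx)
  rw [res_length] at hxw
  refine ⟨hA.map x, mem_ball.2 ?_, mem_range_self x⟩
  linarith [dist_triangle (hA.map x) w z, mem_ball.1 hw]

theorem isDenseEmbedding_map (hA : IsDenseLusinScheme A) : IsDenseEmbedding hA.map := by
  refine .mk' _ hA.continuous_map hA.denseRange_map hA.injective_map fun x s hs ↦ ?_
  obtain ⟨_, ⟨y, n, rfl⟩, hxy, hys⟩ := (isTopologicalBasis_cylinders fun _ ↦ ℕ).mem_nhds_iff.1 hs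
  refine ⟨A (res x n), (hA.isOpen _).mem_nhds (hA.map_mem x n), fun z hz ↦ hys ?_⟩
  rw [← mem_cylinder_iff_eq.1 hxy, cylinder_eq_res]
  exact hA.res_eq_of_mem (hA.map_mem z n) hz

end IsDenseLusinScheme

end LusinScheme

theorem stmt_10 (X : Type*) [TopologicalSpace X] [PolishSpace X] [Nonempty X]
    (hperf : Preperfect (Set.univ : Set X)) (h : PerfectProp X) :
    PerfectProp (ℕ → ℕ) := by
  let := TopologicalSpace.upgradeIsCompletelyMetrizable X
  have : PerfectSpace X := ⟨hperf⟩
  obtain ⟨A, hA⟩ := exists_isDenseLusinScheme (X := X)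
  have hg := hA.isDenseEmbedding_map
  intro S hS
  obtain ⟨P, hP_nwd, hP, -, hSP⟩ := h (hA.map '' S) fun hm ↦ hS <| by
    simpa only [hg.injective.preimage_image] using hg.isDenseInducing.isMeagre_preimage hm
  obtain ⟨C, K, hC, hK, hCK⟩ :=
    exists_countable_union_perfect_of_isClosed (hP.closed.preimage hA.continuous_map)
  have hSK : ¬ IsMeagre ((↑) ⁻¹' S : Set K) := fun hm ↦
    hSP (hg.isEmbedding.isMeagre_preimage_val_image hP.acc hC hCK hm)
  obtain ⟨⟨x, hx⟩, -⟩ := nonempty_of_not_isMeagre hSK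
  exact ⟨K, (hg.isDenseInducing.isNowhereDense_preimage hP_nwd).mono (hCK ▸ subset_union_right),
    hK, ⟨x, hx⟩, hSK⟩
end

section
/- Assuming the continuum hypothesis, there exists a Luzin set: an uncountable set L ⊆ ℝ such that L ∩ N is countable for every nowhere dense set N ⊆ ℝ. -/
open Set Cardinal

/-- Every open subset of ℝ is the union of rational intervals contained in it. -/
lemma aux_open_eq_iUnion {u : Set ℝ} (hu : IsOpen u) :
    u = ⋃ p ∈ {p : ℚ × ℚ | Ioo (p.1 : ℝ) p.2 ⊆ u}, Ioo (p.1 : ℝ) p.2 := by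
  apply Set.Subset.antisymm
  · intro x hx
    obtain ⟨ε, hε, hball⟩ := Metric.isOpen_iff.1 hu x hx
    rw [Real.ball_eq_Ioo] at hball
    obtain ⟨q1, hq1, hq1'⟩ := exists_rat_btwn (show x - ε < x by linarith)
    obtain ⟨q2, hq2, hq2'⟩ := exists_rat_btwn (show x < x + ε by linarith)
    refine Set.mem_biUnion (show (q1, q2) ∈ _ from ?_) ⟨hq1', hq2⟩
    intro y hy
    exact hball ⟨by exact lt_trans hq1 hy.1, lt_trans hy.2 hq2'⟩
  · exact Set.iUnion₂_subset fun p hp => hp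

/-- There are at most continuum many closed subsets of ℝ. -/
lemma aux_mk_closed_le : #{s : Set ℝ // IsClosed s} ≤ 𝔠 := by
  have hinj : Function.Injective
      (fun s : {s : Set ℝ // IsClosed s} => {p : ℚ × ℚ | Ioo (p.1 : ℝ) p.2 ⊆ (s : Set ℝ)ᶜ}) := by
    intro s t hst
    have h1 := aux_open_eq_iUnion s.2.isOpen_compl
    have h2 := aux_open_eq_iUnion t.2.isOpen_compl
    simp only at hst
    ext x
    rw [← not_iff_not, ← Set.mem_compl_iff, ← Set.mem_compl_iff, h1, h2, hst]
  calc #{s : Set ℝ // IsClosed s} ≤ #(Set (ℚ × ℚ)) := Cardinal.mk_le_of_injective hinj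
    _ = 2 ^ (#(ℚ × ℚ)) := by simp [Cardinal.mk_set]
    _ = 𝔠 := by
        rw [← Cardinal.two_power_aleph0]
        congr 1
        rw [Cardinal.mk_prod, Cardinal.mk_denumerable, Cardinal.lift_id,
          Cardinal.aleph0_mul_aleph0]

theorem stmt_15 (CH : Cardinal.mk ℝ = Cardinal.aleph 1) :
    ∃ L : Set ℝ, ¬ L.Countable ∧
      ∀ N : Set ℝ, IsNowhereDense N → (L ∩ N).Countable := by
  classical
  set T := (Cardinal.aleph 1).ord.ToType with hT
  -- the family of closed nowhere dense subsets of ℝ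
  set C := {s : Set ℝ // IsClosed s ∧ IsNowhereDense s} with hC
  have hCne : Nonempty C := ⟨⟨∅, isClosed_empty, isNowhereDense_empty⟩⟩
  have hmkC : #C ≤ #T := by
    rw [Cardinal.mk_ord_toType, ← CH, Cardinal.mk_real]
    exact le_trans (Cardinal.mk_le_mk_of_subset (fun s hs => hs.1)) aux_mk_closed_le
  -- a surjective enumeration of closed nowhere dense sets by T
  obtain ⟨g⟩ := hmkC
  have hFsurj : Function.Surjective (Function.invFun (⇑g)) :=
    Function.invFun_surjective (f := ⇑g) g.injective
  set F : T → Set ℝ := fun α => ((Function.invFun (⇑g) α : C) : Set ℝ) with hF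
  have hFprop : ∀ α, IsClosed (F α) ∧ IsNowhereDense (F α) := fun α => (Function.invFun (⇑g) α).2
  have hFall : ∀ s : Set ℝ, IsClosed s → IsNowhereDense s → ∃ α, F α = s := by
    intro s h1 h2
    obtain ⟨α, hα⟩ := hFsurj ⟨s, h1, h2⟩
    exact ⟨α, by rw [hF]; simp [hα]⟩
  have wf : WellFounded ((· < ·) : T → T → Prop) := IsWellFounded.wf
  -- countability of initial segments
  have hIio : ∀ α : T, (Set.Iio α).Countable := by
    intro α
    rw [Cardinal.countable_iff_lt_aleph_one]
    exact Cardinal.mk_Iio_ord_toType α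
  -- the "bad" set to avoid at stage α
  set bad : ∀ α : T, (∀ β, β < α → ℝ) → Set ℝ :=
    fun α h => (⋃ β ∈ Set.Iic α, F β) ∪ ⋃ (β : T) (hβ : β < α), {h β hβ} with hbad
  have key : ∀ (α : T) (h : ∀ β, β < α → ℝ), ∃ y : ℝ, y ∉ bad α h := by
    intro α h
    have hmeagre : IsMeagre (bad α h) := by
      rw [isMeagre_iff_countable_union_isNowhereDense]
      refine ⟨(F '' Set.Iic α) ∪ ((fun p : Set.Iio α => ({h p.1 p.2} : Set ℝ)) '' Set.univ),
        ?_, ?_, ?_⟩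
      · rintro t (⟨β, _, rfl⟩ | ⟨p, _, rfl⟩)
        · exact (hFprop β).2
        · rw [isClosed_singleton.isNowhereDense_iff]
          exact interior_singleton _
      · refine Set.Countable.union (Set.Countable.image ?_ _) (Set.Countable.image ?_ _)
        · refine ((hIio α).union (Set.countable_singleton α)).mono ?_
          intro β hβ
          exact Or.imp id id (lt_or_eq_of_le (Set.mem_Iic.mp hβ))
        · exact Set.countable_univ_iff.mpr ((hIio α).to_subtype)
      · rw [hbad]
        rintro y (hy | hy)
        · obtain ⟨β, hβ, hyβ⟩ := Set.mem_iUnion₂.mp hy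
          exact Set.mem_sUnion.mpr ⟨F β, Or.inl ⟨β, hβ, rfl⟩, hyβ⟩
        · obtain ⟨β, hβ, hyβ⟩ := by simpa using hy
          exact Set.mem_sUnion.mpr ⟨{h β hβ}, Or.inr ⟨⟨β, hβ⟩, trivial, rfl⟩, by simpa using hyβ⟩
    have hdense : Dense (bad α h)ᶜ := dense_of_mem_residual hmeagre
    obtain ⟨y, hy⟩ := hdense.nonempty
    exact ⟨y, hy⟩
  set x : T → ℝ := wf.fix (fun α h => Classical.choose (key α h)) with hxdef
  have hx : ∀ α : T, x α ∉ bad α (fun β _ => x β) := by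
    intro α
    have := wf.fix_eq (fun α h => Classical.choose (key α h)) α
    rw [hxdef, this]
    exact Classical.choose_spec (key α (fun β _ => x β))
  have hx1 : ∀ α β : T, β ≤ α → x α ∉ F β := by
    intro α β hβ hmem
    exact hx α (Or.inl (Set.mem_biUnion hβ hmem))
  have hx2 : ∀ α β : T, β < α → x α ≠ x β := by
    intro α β hβ heq
    exact hx α (Or.inr (Set.mem_iUnion₂.mpr ⟨β, hβ, heq⟩))
  have hxinj : Function.Injective x := by
    intro α β hαβ
    rcases lt_trichotomy α β with h | h | h
    · exact absurd hαβ.symm (hx2 β α h)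
    · exact h
    · exact absurd hαβ (hx2 α β h)
  refine ⟨Set.range x, ?_, ?_⟩
  · intro hcount
    rw [Cardinal.countable_iff_lt_aleph_one] at hcount
    rw [Cardinal.mk_range_eq _ hxinj, Cardinal.mk_ord_toType] at hcount
    exact lt_irrefl _ hcount
  · intro N hN
    obtain ⟨β, hβ⟩ := hFall (closure N) isClosed_closure hN.closure
    have hsub : Set.range x ∩ N ⊆ x '' Set.Iio β := by
      rintro y ⟨⟨α, rfl⟩, hyN⟩
      refine ⟨α, ?_, rfl⟩
      by_contra hlt
      simp only [Set.mem_Iio, not_lt] at hlt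
      exact hx1 α β hlt (hβ ▸ subset_closure hyN)
    exact ((hIio β).image x).mono hsub
end
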